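/- Let k ≥ 3 and 0 < ε ≤ (k-1)/2 be integers and let G be a vgr(n, k, 5, k(k-1)²/2 − ε)-graph. Let u be a vertex of G, let v be a vertex at distance exactly 3 from u whose unique neighbor in N_2(u) is v', and define V_{B''} = (N_2(v) ∩ N_2(u)) ∖ N(v') and V_{C''} = N_2(v) ∖ (N(u) ∪ N_2(u) ∪ N(v')). Then the number of neighbors v_i of v with v_i ≠ v' satisfying |N(v_i) ∩ V_{C''}| = k − 2 is exactly |V_{B''}|. -/

import Mathlib

open SimpleGraph

/-- The set of vertices at distance exactly 2 from `v` in `G` (denoted `N₂(v)`). -/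
def distTwoSet {V : Type*} (G : SimpleGraph V) (v : V) : Set V := {w | G.dist v w = 2}

/-- The set of edges of `G` with one endpoint in `A` and the other endpoint in `B`,
denoted `E(A, B)`. -/
def edgesBetween {V : Type*} (G : SimpleGraph V) (A B : Set V) : Set (Sym2 V) :=
  {e | e ∈ G.edgeSet ∧ ∃ a ∈ A, ∃ b ∈ B, e = s(a, b)}

/-- Twice the number of cycles of length `g` through the vertex `v`: we count the closed
walks based at `v` that are cycles of length `g`; every (undirected) cycle of length `g`
containing `v` corresponds to exactly two such walks (its two orientations). -/
noncomputable def doubleCycleCountAt {V : Type*} (G : SimpleGraph V) (g : ℕ) (v : V) : ℕ :=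
  {p : G.Walk v v | p.IsCycle ∧ p.length = g}.ncard

/-- `G` is a `vgr(n, k, g, lam)`-graph: a `k`-regular graph of girth `g` on `n` vertices
in which every vertex lies on exactly `lam` cycles of length `g` (equivalently, the number
of closed cycle-walks of length `g` based at each vertex is `2 * lam`). -/
def IsVGR {V : Type*} [Fintype V] (G : SimpleGraph V) [DecidableRel G.Adj]
    (n k g lam : ℕ) : Prop :=
  Fintype.card V = n ∧ (∀ v : V, G.degree v = k) ∧ G.girth = (g : ℕ∞) ∧
    ∀ v : V, doubleCycleCountAt G g v = 2 * lam

/-!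
Girth five makes `|N₂(z)| = k(k-1)`, gives every vertex of `N₂(z)` exactly one neighbour in `N(z)`,
and makes the pentagons through `z` correspond to the edges inside `N₂(z)`. Counting the degrees
of the vertices of `N₂(z)` therefore turns `λ = k(k-1)²/2 - ε` into `e(N₂(z), N₃(z)) = 2ε`, for
every vertex `z`.

A neighbour `vᵢ ≠ v'` of `v` has its other `k - 1` neighbours in `V_{B''} ∪ V_{C''}`, so
`|N(vᵢ) ∩ V_{C''}| = k - 2` says that `vᵢ` has exactly one neighbour in `V_{B''}`. Each vertex of
`V_{B''}` has exactly one neighbour in `N(v) ∖ {v'}`, so double counting proves the theorem once no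
`vᵢ` has two neighbours in `V_{B''}`. Two such neighbours would each need about `k` edges, most of
them into `N₃(u)` or `N₃(v)`, which overdraws the budgets `2ε ≤ k - 1` of edges leaving `N₂(u)`,
`N₂(v)` and `N₂(v')`.
-/

open Finset

lemma Finset.add_add_card_le_sum_add_two {ι : Type*} {s : Finset ι} {f : ι → ℕ} {i j : ι}
    (hf : ∀ x ∈ s, 1 ≤ f x) (hi : i ∈ s) (hj : j ∈ s) (hij : i ≠ j) :
    f i + f j + #s ≤ ∑ x ∈ s, f x + 2 := by
  have h₁ := add_le_sum (f := fun x => f x - 1) (fun _ _ => Nat.zero_le _) hi hj hij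
  have h₂ : ∑ x ∈ s, (f x - 1) + #s = ∑ x ∈ s, f x := by
    rw [card_eq_sum_ones, ← sum_add_distrib]
    exact sum_congr rfl fun x hx => Nat.sub_add_cancel (hf x hx)
  have := hf i hi
  have := hf j hj
  omega

lemma Finset.card_filter_eq_one_eq_sum {ι : Type*} {s : Finset ι} {f : ι → ℕ}
    (hf : ∀ x ∈ s, f x ≤ 1) : #{x ∈ s | f x = 1} = ∑ x ∈ s, f x := by
  rw [card_filter]
  refine sum_congr rfl fun x hx => ?_
  have := hf x hx
  split_ifs <;> omega

namespace SimpleGraph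

variable {V : Type*} {G : SimpleGraph V} {k : ℕ} {a b c d u v v' w x y z w₁ w₂ : V}

lemma egirth_eq_girth (h : G.girth ≠ 0) : G.egirth = G.girth :=
  (ENat.natCast_toNat fun htop => h (by simp [girth, htop])).symm

lemma egirth_le_three (hab : G.Adj a b) (hbc : G.Adj b c) (hca : G.Adj c a) :
    G.egirth ≤ 3 := by
  have hcyc : (Walk.cons hab (Walk.cons hbc (Walk.cons hca Walk.nil))).IsCycle := by
    simp [Walk.cons_isCycle_iff, hab.ne, hbc.ne, hca.ne, hca.ne.symm, hab.ne.symm]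
  simpa using egirth_le_length hcyc

lemma egirth_le_four (hab : G.Adj a b) (hbc : G.Adj b c) (hcd : G.Adj c d) (hda : G.Adj d a)
    (hac : a ≠ c) (hbd : b ≠ d) : G.egirth ≤ 4 := by
  have hcyc :
      (Walk.cons hab (Walk.cons hbc (Walk.cons hcd (Walk.cons hda Walk.nil)))).IsCycle := by
    simp [Walk.cons_isCycle_iff, hab.ne, hbc.ne, hcd.ne, hda.ne, hab.ne.symm, hda.ne.symm,
      hac, hac.symm, hbd]
  simpa using egirth_le_length hcyc

lemma not_adj_of_adj_of_adj (hG : 4 ≤ G.egirth) (hab : G.Adj a b) (hbc : G.Adj b c) :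
    ¬G.Adj a c := fun hac => by
  have := hG.trans (egirth_le_three hab hbc hac.symm)
  norm_num at this

lemma eq_of_adj_of_adj (hG : 5 ≤ G.egirth) (hac : a ≠ c) (hab : G.Adj a b) (hbc : G.Adj b c)
    (had : G.Adj a d) (hdc : G.Adj d c) : b = d := by
  by_contra hbd
  have := hG.trans (egirth_le_four hab hbc hdc.symm had.symm hac hbd)
  norm_num at this

lemma Adj.dist_le_dist_add_one (hab : G.Adj a b) : G.dist z b ≤ G.dist z a + 1 := by
  rcases hab.diff_dist_adj (u := z) with h | h | h <;> omega

lemma dist_eq_two_iff :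
    G.dist u v = 2 ↔ u ≠ v ∧ ¬G.Adj u v ∧ ∃ w, G.Adj u w ∧ G.Adj w v := by
  rw [dist, ENat.toNat_eq_iff two_ne_zero]
  simp only [Nat.cast_ofNat, edist_eq_two_iff, Set.Nonempty, mem_commonNeighbors]
  exact and_congr_right' <| and_congr_right' <| exists_congr fun w =>
    and_congr_right' (G.adj_comm _ _)

lemma dist_eq_two_of_adj_of_adj (hG : 4 ≤ G.egirth) (hab : G.Adj a b) (hbc : G.Adj b c)
    (hac : a ≠ c) : G.dist a c = 2 :=
  dist_eq_two_iff.mpr ⟨hac, not_adj_of_adj_of_adj hG hab hbc, b, hab, hbc⟩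

lemma dist_le_two_of_adj_of_adj (hab : G.Adj a b) (hbc : G.Adj b c) : G.dist a c ≤ 2 := by
  simpa using dist_le (Walk.cons hab (Walk.cons hbc Walk.nil))

lemma Walk.exists_eq_cons_of_length_eq_five {p : G.Walk z z} (hl : p.length = 5) :
    ∃ (a y w b : V) (h₁ : G.Adj z a) (h₂ : G.Adj a y) (h₃ : G.Adj y w) (h₄ : G.Adj w b)
      (h₅ : G.Adj b z),
      p = .cons h₁ (.cons h₂ (.cons h₃ (.cons h₄ (.cons h₅ .nil)))) := by
  rcases p with _ | ⟨h₁, _ | ⟨h₂, _ | ⟨h₃, _ | ⟨h₄, _ | ⟨h₅, _ | ⟨h₆, p⟩⟩⟩⟩⟩⟩ <;>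
    simp at hl
  exact ⟨_, _, _, _, h₁, h₂, h₃, h₄, h₅, rfl⟩

lemma adj_and_dist_eq_two_of_inter_eq (hv' : G.neighborSet v ∩ distTwoSet G u = {v'}) :
    G.Adj v v' ∧ G.dist u v' = 2 :=
  (hv' ▸ rfl : v' ∈ G.neighborSet v ∩ distTwoSet G u)

lemma eq_of_inter_eq (hv' : G.neighborSet v ∩ distTwoSet G u = {v'}) (hvy : G.Adj v y)
    (huy : G.dist u y = 2) : y = v' := by
  have : y ∈ G.neighborSet v ∩ distTwoSet G u := ⟨hvy, huy⟩
  rwa [hv'] at this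

lemma dist_eq_three_of_adj (huv : G.dist u v = 3)
    (hv' : G.neighborSet v ∩ distTwoSet G u = {v'}) (hvy : G.Adj v y) (hyv' : y ≠ v')
    (hyw : G.Adj y w) (huw : G.dist u w = 2) : G.dist u y = 3 := by
  have := hvy.symm.dist_le_dist_add_one (z := u)
  have := hyw.symm.dist_le_dist_add_one (z := u)
  have : G.dist u y ≠ 2 := fun h => hyv' (eq_of_inter_eq hv' hvy h)
  omega

lemma eq_of_adj_of_dist_eq_two (hG : 5 ≤ G.egirth) (huv : G.dist u v = 3)
    (hv' : G.neighborSet v ∩ distTwoSet G u = {v'}) (hux : G.Adj u x) (hxv' : G.Adj x v')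
    (huc : G.Adj u c) (hvc : G.dist v c = 2) : c = x := by
  obtain ⟨-, -, y, hvy, hyc⟩ := dist_eq_two_iff.mp hvc
  have hle := hvy.symm.dist_le_dist_add_one (z := u)
  have := dist_le_two_of_adj_of_adj huc hyc.symm
  obtain rfl := eq_of_inter_eq hv' hvy (by omega)
  have huy : u ≠ y := by rintro rfl; rw [dist_self] at hle; omega
  exact eq_of_adj_of_adj hG huy huc hyc.symm hux hxv'

variable [Fintype V]

noncomputable def sphere (G : SimpleGraph V) (z : V) (r : ℕ) : Finset V := {w | G.dist z w = r}

@[simp] lemma mem_sphere {r : ℕ} : y ∈ G.sphere z r ↔ G.dist z y = r := by simp [sphere]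

lemma coe_sphere_two : (G.sphere z 2 : Set V) = distTwoSet G z := by ext; simp [distTwoSet]

variable [DecidableEq V] [DecidableRel G.Adj]

lemma card_inter_neighborFinset_le_one (hG : 5 ≤ G.egirth) (h : a ≠ b) :
    #(G.neighborFinset a ∩ G.neighborFinset b) ≤ 1 := by
  simp only [card_le_one, mem_inter, mem_neighborFinset]
  rintro c ⟨hac, hbc⟩ d ⟨had, hbd⟩
  exact eq_of_adj_of_adj hG h hac hbc.symm had hbd.symm

lemma card_inter_neighborFinset_of_dist_eq_two (hG : 5 ≤ G.egirth) (h : G.dist z y = 2) :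
    #(G.neighborFinset y ∩ G.neighborFinset z) = 1 := by
  obtain ⟨hzy, -, m, hzm, hmy⟩ := dist_eq_two_iff.mp h
  exact (card_inter_neighborFinset_le_one hG hzy.symm).antisymm
    (one_le_card.mpr ⟨m, by simp [hzm, hmy.symm]⟩)

lemma sphere_two_eq_biUnion (hG : 4 ≤ G.egirth) (z : V) :
    G.sphere z 2 = (G.neighborFinset z).biUnion fun a => (G.neighborFinset a).erase z := by
  ext y
  simp only [mem_sphere, mem_biUnion, mem_neighborFinset, mem_erase, dist_eq_two_iff]
  constructor
  · rintro ⟨hzy, -, a, hza, hay⟩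
    exact ⟨a, hza, hzy.symm, hay⟩
  · rintro ⟨a, hza, hyz, hay⟩
    exact ⟨hyz.symm, not_adj_of_adj_of_adj hG hza hay, a, hza, hay⟩

lemma card_sphere_two (hG : 5 ≤ G.egirth) (hreg : G.IsRegularOfDegree k) (z : V) :
    #(G.sphere z 2) = k * (k - 1) := by
  rw [sphere_two_eq_biUnion (hG.trans' (by norm_num)), card_biUnion]
  · rw [sum_const_nat fun a ha => ?_, card_neighborFinset_eq_degree, hreg.degree_eq]
    rw [card_erase_of_mem (by simpa [adj_comm] using ha), card_neighborFinset_eq_degree,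
      hreg.degree_eq]
  · intro a ha b hb hab
    simp only [Function.onFun, Finset.disjoint_left, mem_erase, mem_neighborFinset]
    rintro y ⟨hyz, hay⟩ ⟨-, hby⟩
    exact hab (eq_of_adj_of_adj hG hyz.symm (by simpa using ha) hay (by simpa using hb) hby)

lemma one_add_card_inter_sphere_two_add_card_inter_sphere_three (hG : 5 ≤ G.egirth)
    (hreg : G.IsRegularOfDegree k) (h : G.dist z y = 2) :
    1 + #(G.neighborFinset y ∩ G.sphere z 2) + #(G.neighborFinset y ∩ G.sphere z 3) = k := by
  have hmaps : Set.MapsTo (G.dist z) (G.neighborFinset y) ({1, 2, 3} : Finset ℕ) := by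
    intro w hw
    have hyw : G.Adj y w := by simpa using hw
    have := hyw.dist_le_dist_add_one (z := z)
    have := hyw.symm.dist_le_dist_add_one (z := z)
    simp only [coe_insert, coe_singleton, Set.mem_insert_iff, Set.mem_singleton_iff]
    omega
  have hfiber (r : ℕ) :
      ({w ∈ G.neighborFinset y | G.dist z w = r} : Finset V) =
        G.neighborFinset y ∩ G.sphere z r := by
    ext; simp
  have hone : G.neighborFinset y ∩ G.sphere z 1 = G.neighborFinset y ∩ G.neighborFinset z := by
    ext; simp
  rw [← hreg.degree_eq y, ← card_neighborFinset_eq_degree, card_eq_sum_card_fiberwise hmaps]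
  simp [hfiber, hone, card_inter_neighborFinset_of_dist_eq_two hG h, add_assoc]

lemma sum_card_inter_eq_card_filter_adj (s : Finset V) :
    ∑ y ∈ s, #(G.neighborFinset y ∩ s) = #{q ∈ s ×ˢ s | G.Adj q.1 q.2} := by
  rw [card_filter, sum_product]
  refine sum_congr rfl fun y _ => ?_
  rw [← card_filter, filter_congr_decidable]
  congr 1
  ext; simp [and_comm]

/-- A pentagon through `z` is determined by its edge joining its two vertices in `N₂(z)`. -/
lemma doubleCycleCountAt_five_eq_sum (hG : 5 ≤ G.egirth) (z : V) :
    doubleCycleCountAt G 5 z = ∑ y ∈ G.sphere z 2, #(G.neighborFinset y ∩ G.sphere z 2) := by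
  have h4 : 4 ≤ G.egirth := hG.trans' (by norm_num)
  rw [sum_card_inter_eq_card_filter_adj, ← Set.ncard_coe_finset, doubleCycleCountAt]
  refine Set.ncard_congr (fun p _ => (p.getVert 2, p.getVert 3)) ?_ ?_ ?_
  · rintro p ⟨-, hl⟩
    obtain ⟨a, y, w, b, h₁, h₂, h₃, h₄, h₅, rfl⟩ :=
      Walk.exists_eq_cons_of_length_eq_five hl
    have hzy : z ≠ y := by rintro rfl; exact not_adj_of_adj_of_adj h4 h₃ h₄ h₅.symm
    have hzw : z ≠ w := by rintro rfl; exact not_adj_of_adj_of_adj h4 h₁ h₂ h₃.symm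
    simp [Walk.getVert_cons_succ, dist_eq_two_of_adj_of_adj h4 h₁ h₂ hzy,
      dist_eq_two_of_adj_of_adj h4 h₅.symm h₄.symm hzw, h₃]
  · rintro p p' ⟨-, hl⟩ ⟨-, hl'⟩ heq
    obtain ⟨a, y, w, b, h₁, h₂, h₃, h₄, h₅, rfl⟩ :=
      Walk.exists_eq_cons_of_length_eq_five hl
    obtain ⟨a', y', w', b', h₁', h₂', h₃', h₄', h₅', rfl⟩ :=
      Walk.exists_eq_cons_of_length_eq_five hl'
    simp only [Walk.getVert_cons_succ, Walk.getVert_zero, Prod.mk.injEq] at heq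
    obtain ⟨rfl, rfl⟩ := heq
    have hzy : z ≠ y := by rintro rfl; exact not_adj_of_adj_of_adj h4 h₃ h₄ h₅.symm
    have hzw : z ≠ w := by rintro rfl; exact not_adj_of_adj_of_adj h4 h₁ h₂ h₃.symm
    obtain rfl := eq_of_adj_of_adj hG hzy h₁ h₂ h₁' h₂'
    obtain rfl := eq_of_adj_of_adj hG hzw h₅.symm h₄.symm h₅'.symm h₄'.symm
    rfl
  · rintro ⟨y, w⟩ hq
    simp only [coe_filter, mem_product, mem_sphere, Set.mem_ofPred_eq] at hq
    obtain ⟨⟨hy, hw⟩, hyw⟩ := hq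
    obtain ⟨hzy, hnzy, a, hza, hay⟩ := dist_eq_two_iff.mp hy
    obtain ⟨hzw, hnzw, b, hzb, hbw⟩ := dist_eq_two_iff.mp hw
    have hab : a ≠ b := by rintro rfl; exact not_adj_of_adj_of_adj h4 hay hyw hbw
    have haw : a ≠ w := by rintro rfl; exact hnzw hza
    have hyb : y ≠ b := by rintro rfl; exact hnzy hzb
    refine ⟨.cons hza (.cons hay (.cons hyw (.cons hbw.symm (.cons hzb.symm .nil)))),
      ⟨?_, rfl⟩, by simp [Walk.getVert_cons_succ]⟩
    simp [Walk.cons_isCycle_iff, hza.ne, hay.ne, hyw.ne, hbw.ne.symm, hzb.ne, hzy, hzw, hab, haw,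
      hyb, hza.ne.symm, hzy.symm, hzw.symm, hzb.ne.symm]

/-- The number `e(N₂(z), N₃(z))` of edges between `N₂(z)` and `N₃(z)`. -/
noncomputable def edgesTwoThree (G : SimpleGraph V) [DecidableRel G.Adj] (z : V) : ℕ :=
  ∑ y ∈ G.sphere z 2, #(G.neighborFinset y ∩ G.sphere z 3)

lemma sum_le_edgesTwoThree {s : Finset V} {z : V} (hs : s ⊆ G.sphere z 2) :
    ∑ y ∈ s, #(G.neighborFinset y ∩ G.sphere z 3) ≤ G.edgesTwoThree z :=
  sum_le_sum_of_subset hs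

lemma edgesTwoThree_add_doubleCycleCountAt (hG : 5 ≤ G.egirth) (hreg : G.IsRegularOfDegree k)
    (z : V) : G.edgesTwoThree z + doubleCycleCountAt G 5 z = k * (k - 1) ^ 2 := by
  have hdeg : ∑ y ∈ G.sphere z 2,
      (1 + #(G.neighborFinset y ∩ G.sphere z 2) + #(G.neighborFinset y ∩ G.sphere z 3)) =
        #(G.sphere z 2) * k :=
    sum_const_nat fun y hy =>
      one_add_card_inter_sphere_two_add_card_inter_sphere_three hG hreg (mem_sphere.mp hy)
  rw [sum_add_distrib, sum_add_distrib, sum_const, smul_eq_mul, mul_one,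
    card_sphere_two hG hreg] at hdeg
  have hk : k * (k - 1) * k = k * (k - 1) + k * (k - 1) ^ 2 := by
    rcases k with _ | k
    · simp
    · simp only [Nat.add_sub_cancel]; ring
  rw [edgesTwoThree, doubleCycleCountAt_five_eq_sum hG]
  omega

lemma edgesTwoThree_eq (hG : 5 ≤ G.egirth) (hreg : G.IsRegularOfDegree k) {ε : ℕ}
    (hε : 2 * ε ≤ k - 1) {z : V}
    (hcyc : doubleCycleCountAt G 5 z = 2 * (k * (k - 1) ^ 2 / 2 - ε)) :
    G.edgesTwoThree z = 2 * ε := by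
  have heven : 2 * (k * (k - 1) ^ 2 / 2) = k * (k - 1) ^ 2 := by
    refine Nat.two_mul_div_two_of_even ?_
    rw [sq, ← mul_assoc]
    exact (Nat.even_mul_pred_self k).mul_right _
  have hle : k - 1 ≤ k * (k - 1) ^ 2 := by
    rcases k with _ | k
    · simp
    · simp only [Nat.add_sub_cancel]; nlinarith
  have := edgesTwoThree_add_doubleCycleCountAt hG hreg z
  omega

lemma sum_card_neighborFinset_inter_comm (s t : Finset V) :
    ∑ a ∈ s, #(G.neighborFinset a ∩ t) = ∑ b ∈ t, #(G.neighborFinset b ∩ s) := by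
  have := sum_card_bipartiteAbove_eq_sum_card_bipartiteBelow G.Adj (s := s) (t := t)
  simp only [bipartiteAbove, bipartiteBelow] at this
  convert this using 3 <;> ext <;> simp [adj_comm, and_comm]

lemma card_inter_add_card_inter_add_two_le (hG : 5 ≤ G.egirth) {s : Finset V} (hy : y ∉ s)
    (h₁ : G.Adj y w₁) (h₂ : G.Adj y w₂) (hw₁ : w₁ ∈ s) (hw₂ : w₂ ∈ s) (hne : w₁ ≠ w₂) :
    #(G.neighborFinset w₁ ∩ s) + #(G.neighborFinset w₂ ∩ s) + 2 ≤ #s := by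
  have h4 : 4 ≤ G.egirth := hG.trans' (by norm_num)
  have hdisj : Disjoint (G.neighborFinset w₁ ∩ s) (G.neighborFinset w₂ ∩ s) := by
    refine Finset.disjoint_left.mpr fun z hz₁ hz₂ => ?_
    simp only [mem_inter, mem_neighborFinset] at hz₁ hz₂
    exact ne_of_mem_of_not_mem hz₁.2 hy
      (eq_of_adj_of_adj hG hne hz₁.1 hz₂.1.symm h₁.symm h₂)
  have hsub : G.neighborFinset w₁ ∩ s ∪ G.neighborFinset w₂ ∩ s ⊆ (s.erase w₁).erase w₂ := by
    intro z hz
    simp only [mem_union, mem_inter, mem_neighborFinset] at hz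
    simp only [mem_erase]
    rcases hz with ⟨hw₁z, hz⟩ | ⟨hw₂z, hz⟩
    · exact ⟨by rintro rfl; exact not_adj_of_adj_of_adj h4 h₁ hw₁z h₂, hw₁z.ne', hz⟩
    · exact ⟨hw₂z.ne', by rintro rfl; exact not_adj_of_adj_of_adj h4 h₂ hw₂z h₁, hz⟩
  have := card_le_card hsub
  rw [card_union_of_disjoint hdisj] at this
  have := card_erase_add_one (mem_erase.mpr ⟨hne.symm, hw₂⟩)
  have := card_erase_add_one hw₁
  omega

/-- Sending `c ∈ N(u) ∩ N₂(z)` to its neighbour in `N(z)` is injective, by girth five. -/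
lemma card_inter_sphere_two_le (hG : 5 ≤ G.egirth) (hadj : ¬G.Adj u z) :
    #(G.neighborFinset u ∩ G.sphere z 2) ≤ #(G.neighborFinset z ∩ G.sphere u 2) := by
  have hmid : ∀ c ∈ G.neighborFinset u ∩ G.sphere z 2,
      ∃ b ∈ G.neighborFinset z ∩ G.sphere u 2, G.Adj b c := by
    intro c hc
    simp only [mem_inter, mem_neighborFinset, mem_sphere] at hc
    obtain ⟨-, -, b, hzb, hbc⟩ := dist_eq_two_iff.mp hc.2
    have hub : u ≠ b := by rintro rfl; exact hadj hzb.symm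
    exact ⟨b, mem_inter.mpr ⟨(mem_neighborFinset ..).mpr hzb, mem_sphere.mpr
      (dist_eq_two_of_adj_of_adj (hG.trans' (by norm_num)) hc.1 hbc.symm hub)⟩, hbc⟩
  choose! f hf hfc using hmid
  refine card_le_card_of_injOn f (fun c hc => hf c hc) fun c hc c' hc' he => ?_
  have hzf : G.Adj z (f c) := (mem_neighborFinset ..).mp (mem_inter.mp (hf c hc)).1
  have huf : u ≠ f c := by rintro h; exact hadj (h ▸ hzf).symm
  exact eq_of_adj_of_adj hG huf ((mem_neighborFinset ..).mp (mem_inter.mp hc).1) (hfc c hc).symm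
    ((mem_neighborFinset ..).mp (mem_inter.mp hc').1) (he ▸ hfc c' hc').symm

-- `vertB G u v v'` and `vertC G u v v'` are the sets `V_{B''}` and `V_{C''}` of the paper.
noncomputable def vertB (G : SimpleGraph V) [DecidableRel G.Adj] (u v v' : V) : Finset V :=
  (G.sphere v 2 ∩ G.sphere u 2) \ G.neighborFinset v'

noncomputable def vertC (G : SimpleGraph V) [DecidableRel G.Adj] (u v v' : V) : Finset V :=
  G.sphere v 2 \ (G.neighborFinset u ∪ G.sphere u 2 ∪ G.neighborFinset v')

lemma mem_vertB : w ∈ vertB G u v v' ↔ G.dist v w = 2 ∧ G.dist u w = 2 ∧ ¬G.Adj v' w := by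
  simp [vertB, and_assoc]

lemma mem_vertC :
    w ∈ vertC G u v v' ↔ G.dist v w = 2 ∧ ¬G.Adj u w ∧ G.dist u w ≠ 2 ∧ ¬G.Adj v' w := by
  simp [vertC]

lemma coe_vertB :
    (vertB G u v v' : Set V) = (distTwoSet G v ∩ distTwoSet G u) \ G.neighborSet v' := by
  simp [vertB, ← coe_sphere_two]

lemma coe_vertC : (vertC G u v v' : Set V) =
    distTwoSet G v \ (G.neighborSet u ∪ distTwoSet G u ∪ G.neighborSet v') := by
  simp only [vertC, coe_sdiff, coe_union, coe_neighborFinset, coe_sphere_two]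

lemma card_inter_vertB_add_card_inter_vertC (hG : 5 ≤ G.egirth) (huv : G.dist u v = 3)
    (hv' : G.neighborSet v ∩ distTwoSet G u = {v'}) (hreg : G.IsRegularOfDegree k)
    (hvy : G.Adj v y) (hyv' : y ≠ v') :
    #(G.neighborFinset y ∩ vertB G u v v') + #(G.neighborFinset y ∩ vertC G u v v') =
      k - 1 := by
  have hvv' := (adj_and_dist_eq_two_of_inter_eq hv').1
  have hsplit : (G.neighborFinset y).erase v =
      G.neighborFinset y ∩ (vertB G u v v' ∪ vertC G u v v') := by
    ext z
    simp only [mem_erase, mem_inter, mem_union, mem_neighborFinset, mem_vertB, mem_vertC]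
    constructor
    · rintro ⟨hzv, hyz⟩
      have hvz : G.dist v z = 2 := dist_eq_two_of_adj_of_adj (hG.trans' (by norm_num)) hvy hyz
        (Ne.symm hzv)
      have huz : ¬G.Adj u z := fun huz => by
        have := hvy.symm.dist_le_dist_add_one (z := u)
        have := dist_le_two_of_adj_of_adj huz hyz.symm
        exact hyv' (eq_of_inter_eq hv' hvy (by omega))
      have hv'z : ¬G.Adj v' z := fun hv'z =>
        hyv' (eq_of_adj_of_adj hG (Ne.symm hzv) hvy hyz hvv' hv'z)
      by_cases huz2 : G.dist u z = 2
      · exact ⟨hyz, .inl ⟨hvz, huz2, hv'z⟩⟩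
      · exact ⟨hyz, .inr ⟨hvz, huz, huz2, hv'z⟩⟩
    · rintro ⟨hyz, ⟨hvz, -⟩ | ⟨hvz, -⟩⟩ <;>
        exact ⟨by rintro rfl; simp at hvz, hyz⟩
  have hdisj : Disjoint (G.neighborFinset y ∩ vertB G u v v')
      (G.neighborFinset y ∩ vertC G u v v') :=
    Finset.disjoint_left.mpr fun z hB hC => (mem_vertC.mp (mem_inter.mp hC).2).2.2.1
      (mem_vertB.mp (mem_inter.mp hB).2).2.1
  rw [← card_union_of_disjoint hdisj, ← inter_union_distrib_left, ← hsplit,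
    card_erase_of_mem (by simpa using hvy.symm), card_neighborFinset_eq_degree, hreg.degree_eq]

lemma card_inter_vertC_eq_iff (hG : 5 ≤ G.egirth) (huv : G.dist u v = 3)
    (hv' : G.neighborSet v ∩ distTwoSet G u = {v'}) (hreg : G.IsRegularOfDegree k)
    (hvy : G.Adj v y) (hyv' : y ≠ v') :
    #(G.neighborFinset y ∩ vertC G u v v') = k - 2 ↔
      #(G.neighborFinset y ∩ vertB G u v v') = 1 := by
  have hvv' := (adj_and_dist_eq_two_of_inter_eq hv').1
  have hk : 2 ≤ k := by
    rw [← hreg.degree_eq v, ← card_neighborFinset_eq_degree]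
    exact one_lt_card.mpr ⟨y, by simpa using hvy, v', by simpa using hvv', hyv'⟩
  have := card_inter_vertB_add_card_inter_vertC hG huv hv' hreg hvy hyv'
  omega

lemma card_inter_erase_eq_one (hG : 5 ≤ G.egirth) (hw : w ∈ vertB G u v v') :
    #(G.neighborFinset w ∩ (G.neighborFinset v).erase v') = 1 := by
  obtain ⟨hvw, -, hv'w⟩ := mem_vertB.mp hw
  have hv' : v' ∉ G.neighborFinset w ∩ G.neighborFinset v := fun h =>
    hv'w ((mem_neighborFinset ..).mp (mem_inter.mp h).1).symm
  rw [inter_erase, erase_eq_of_notMem hv', card_inter_neighborFinset_of_dist_eq_two hG hvw]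

lemma one_le_card_inter_sphere_three (huv : G.dist u v = 3)
    (hv' : G.neighborSet v ∩ distTwoSet G u = {v'}) (hw : w ∈ vertB G u v v') :
    1 ≤ #(G.neighborFinset w ∩ G.sphere u 3) := by
  obtain ⟨hvw, huw, hv'w⟩ := mem_vertB.mp hw
  obtain ⟨-, -, y, hvy, hyw⟩ := dist_eq_two_iff.mp hvw
  have hyv' : y ≠ v' := by rintro rfl; exact hv'w hyw
  exact one_le_card.mpr
    ⟨y, by simpa [hyw.symm] using dist_eq_three_of_adj huv hv' hvy hyv' hyw huw⟩

/-- The neighbours of `w` in `N₂(u)` lie in `N(v')` (at most one of them), `N₃(v)` or `V_{B''}`. -/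
lemma le_two_add_of_mem_vertB (hG : 5 ≤ G.egirth)
    (hv' : G.neighborSet v ∩ distTwoSet G u = {v'}) (hreg : G.IsRegularOfDegree k)
    (hw : w ∈ vertB G u v v') :
    k ≤ 2 + #(G.neighborFinset w ∩ G.sphere u 3) + #(G.neighborFinset w ∩ G.sphere v 3) +
      #(G.neighborFinset w ∩ vertB G u v v') := by
  obtain ⟨hvw, huw, hv'w⟩ := mem_vertB.mp hw
  have hdeg := one_add_card_inter_sphere_two_add_card_inter_sphere_three hG hreg huw
  have hsub : G.neighborFinset w ∩ G.sphere u 2 ⊆ G.neighborFinset w ∩ G.neighborFinset v' ∪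
      G.neighborFinset w ∩ G.sphere v 3 ∪ G.neighborFinset w ∩ vertB G u v v' := by
    intro z
    simp only [mem_inter, mem_union, mem_neighborFinset, mem_sphere, mem_vertB]
    rintro ⟨hwz, huz⟩
    have := hwz.dist_le_dist_add_one (z := v)
    have := hwz.symm.dist_le_dist_add_one (z := v)
    have hvz : G.dist v z ≠ 1 := fun h => by
      obtain rfl := eq_of_inter_eq hv' (dist_eq_one_iff_adj.mp h) huz
      exact hv'w hwz.symm
    by_cases hv'z : G.Adj v' z
    · exact .inl (.inl ⟨hwz, hv'z⟩)
    by_cases hvz3 : G.dist v z = 3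
    · exact .inl (.inr ⟨hwz, hvz3⟩)
    · exact .inr ⟨hwz, by omega, huz, hv'z⟩
  have hwv' : w ≠ v' := by
    rintro rfl
    rw [dist_eq_one_iff_adj.mpr (adj_and_dist_eq_two_of_inter_eq hv').1] at hvw
    omega
  have := card_inter_neighborFinset_le_one hG hwv'
  have := (card_le_card hsub).trans (card_union_le _ _)
  have := card_union_le (G.neighborFinset w ∩ G.neighborFinset v')
    (G.neighborFinset w ∩ G.sphere v 3)
  omega

lemma card_inter_sphere_three_add_sum_le_edgesTwoThree
    (hv' : G.neighborSet v ∩ distTwoSet G u = {v'}) :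
    #(G.neighborFinset v' ∩ G.sphere u 3) +
      ∑ w ∈ vertB G u v v', #(G.neighborFinset w ∩ G.sphere u 3) ≤ G.edgesTwoThree u := by
  obtain ⟨hvv', huv'⟩ := adj_and_dist_eq_two_of_inter_eq hv'
  have hv'B : v' ∉ vertB G u v v' := fun h => by
    have := (mem_vertB.mp h).1
    rw [dist_eq_one_iff_adj.mpr hvv'] at this
    omega
  have hsub : insert v' (vertB G u v v') ⊆ G.sphere u 2 :=
    insert_subset (mem_sphere.mpr huv') fun w hw => mem_sphere.mpr (mem_vertB.mp hw).2.1
  have := sum_le_edgesTwoThree hsub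
  rwa [sum_insert hv'B] at this

lemma one_add_sum_le_edgesTwoThree (hG : 5 ≤ G.egirth) (huv : G.dist u v = 3)
    (hv' : G.neighborSet v ∩ distTwoSet G u = {v'}) :
    1 + ∑ w ∈ vertB G u v v', #(G.neighborFinset w ∩ G.sphere v 3) ≤ G.edgesTwoThree v := by
  obtain ⟨hvv', huv'⟩ := adj_and_dist_eq_two_of_inter_eq hv'
  obtain ⟨-, -, x, hux, hxv'⟩ := dist_eq_two_iff.mp huv'
  have hvx : v ≠ x := by
    rintro rfl
    rw [dist_eq_one_iff_adj.mpr hux] at huv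
    omega
  have hxB : x ∉ vertB G u v v' := fun h => (mem_vertB.mp h).2.2 hxv'.symm
  have hx : 1 ≤ #(G.neighborFinset x ∩ G.sphere v 3) :=
    one_le_card.mpr ⟨u, by simpa [hux.symm, dist_comm] using huv⟩
  calc 1 + ∑ w ∈ vertB G u v v', #(G.neighborFinset w ∩ G.sphere v 3)
      ≤ ∑ w ∈ insert x (vertB G u v v'), #(G.neighborFinset w ∩ G.sphere v 3) := by
        rw [sum_insert hxB]; omega
    _ ≤ G.edgesTwoThree v := sum_le_edgesTwoThree <| insert_subset
        (mem_sphere.mpr (dist_eq_two_of_adj_of_adj (hG.trans' (by norm_num)) hvv' hxv'.symm hvx))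
        fun w hw => mem_sphere.mpr (mem_vertB.mp hw).1

lemma card_sphere_two_sdiff_neighborFinset (hG : 5 ≤ G.egirth) (hreg : G.IsRegularOfDegree k)
    (hvv' : G.Adj v v') : #(G.sphere v 2 \ G.neighborFinset v') = (k - 1) ^ 2 := by
  have hinter : G.sphere v 2 ∩ G.neighborFinset v' = (G.neighborFinset v').erase v := by
    ext b
    simp only [mem_inter, mem_sphere, mem_neighborFinset, mem_erase]
    constructor
    · rintro ⟨hvb, hv'b⟩
      exact ⟨by rintro rfl; simp at hvb, hv'b⟩
    · rintro ⟨hbv, hv'b⟩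
      exact ⟨dist_eq_two_of_adj_of_adj (hG.trans' (by norm_num)) hvv' hv'b (Ne.symm hbv), hv'b⟩
  have := card_sdiff_add_card_inter (G.sphere v 2) (G.neighborFinset v')
  rw [hinter, card_erase_of_mem (by simpa using hvv'.symm), card_neighborFinset_eq_degree,
    hreg.degree_eq, card_sphere_two hG hreg] at this
  have hk : k * (k - 1) = (k - 1) ^ 2 + (k - 1) := by
    rcases k with _ | k
    · simp
    · simp only [Nat.add_sub_cancel]; ring
  omega

lemma exists_adj_ne_notMem_sdiff (hG : 5 ≤ G.egirth) (huv : G.dist u v = 3)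
    (hv' : G.neighborSet v ∩ distTwoSet G u = {v'}) (hv'b : G.Adj v' b) (hub : G.dist u b ≠ 3) :
    ∃ e, G.Adj b e ∧ e ≠ v' ∧ e ∉ G.sphere v 2 \ G.neighborFinset v' := by
  obtain ⟨hvv', huv'⟩ := adj_and_dist_eq_two_of_inter_eq hv'
  obtain ⟨huv'ne, hnuv', x, hux, hxv'⟩ := dist_eq_two_iff.mp huv'
  by_cases hbx : b = x
  · subst hbx
    exact ⟨u, hux.symm, huv'ne, by simp [dist_comm, huv]⟩
  have hub2 : G.dist u b = 2 := by
    have := hv'b.dist_le_dist_add_one (z := u)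
    have := hv'b.symm.dist_le_dist_add_one (z := u)
    have : G.dist u b ≠ 1 := fun h =>
      hbx (eq_of_adj_of_adj hG huv'ne (dist_eq_one_iff_adj.mp h) hv'b.symm hux hxv')
    omega
  obtain ⟨-, -, c, huc, hcb⟩ := dist_eq_two_iff.mp hub2
  refine ⟨c, hcb.symm, by rintro rfl; exact hnuv' huc, fun hc => ?_⟩
  obtain ⟨hvc, hv'c⟩ := mem_sdiff.mp hc
  obtain rfl := eq_of_adj_of_dist_eq_two hG huv hv' hux hxv' huc (mem_sphere.mp hvc)
  exact hv'c (by simpa using hxv'.symm)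

lemma card_inter_sdiff_add_two_le (hG : 5 ≤ G.egirth) (huv : G.dist u v = 3)
    (hv' : G.neighborSet v ∩ distTwoSet G u = {v'}) (hreg : G.IsRegularOfDegree k)
    (hv'b : G.Adj v' b) :
    #(G.neighborFinset b ∩ (G.sphere v 2 \ G.neighborFinset v')) + 2 ≤
      k + if b ∈ G.sphere u 3 then 1 else 0 := by
  have hvv' := (adj_and_dist_eq_two_of_inter_eq hv').1
  have hv'W : v' ∉ G.sphere v 2 \ G.neighborFinset v' := by
    simp [dist_eq_one_iff_adj.mpr hvv']
  have hsub : G.neighborFinset b ∩ (G.sphere v 2 \ G.neighborFinset v') ⊆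
      (G.neighborFinset b).erase v' := fun z hz =>
    mem_erase.mpr ⟨ne_of_mem_of_not_mem (mem_inter.mp hz).2 hv'W, (mem_inter.mp hz).1⟩
  have hcard : #((G.neighborFinset b).erase v') + 1 = k := by
    rw [card_erase_add_one (by simpa using hv'b.symm), card_neighborFinset_eq_degree,
      hreg.degree_eq]
  split_ifs with hbu
  · have := card_le_card hsub
    omega
  · obtain ⟨e, hbe, hev', heW⟩ :=
      exists_adj_ne_notMem_sdiff hG huv hv' hv'b (by simpa using hbu)
    have hsub' : G.neighborFinset b ∩ (G.sphere v 2 \ G.neighborFinset v') ⊆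
        ((G.neighborFinset b).erase v').erase e := fun z hz =>
      mem_erase.mpr ⟨ne_of_mem_of_not_mem (mem_inter.mp hz).2 heW, hsub hz⟩
    have := card_le_card hsub'
    rw [← Nat.add_le_add_iff_right (n := 1),
      card_erase_add_one (mem_erase.mpr ⟨hev', by simpa using hbe⟩)] at this
    omega

lemma card_sdiff_sphere_three_add_le (hG : 5 ≤ G.egirth) (huv : G.dist u v = 3)
    (hv' : G.neighborSet v ∩ distTwoSet G u = {v'}) (hreg : G.IsRegularOfDegree k) :
    #((G.sphere v 2 \ G.neighborFinset v') \ G.sphere v' 3) + 2 * (k - 1) ≤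
      k * (k - 1) + #((G.neighborFinset v').erase v ∩ G.sphere u 3) := by
  have hvv' := (adj_and_dist_eq_two_of_inter_eq hv').1
  set W := G.sphere v 2 \ G.neighborFinset v'
  set A := (G.neighborFinset v').erase v
  have hA : #A = k - 1 := by
    rw [card_erase_of_mem (by simpa using hvv'.symm), card_neighborFinset_eq_degree,
      hreg.degree_eq]
  have hcover : W \ G.sphere v' 3 ⊆ A.biUnion fun b => G.neighborFinset b ∩ W := by
    intro w hw
    obtain ⟨hwW, hw3⟩ := mem_sdiff.mp hw
    obtain ⟨hvw, hv'w⟩ := mem_sdiff.mp hwW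
    rw [mem_sphere] at hvw hw3
    rw [mem_neighborFinset] at hv'w
    have hv'w2 : G.dist v' w = 2 := by
      have := hvv'.dist_le_dist_add_one (z := w)
      have := hvv'.symm.dist_le_dist_add_one (z := w)
      have : G.dist v' w ≠ 1 := fun h => hv'w (dist_eq_one_iff_adj.mp h)
      rw [dist_comm (u := w), dist_comm (u := w)] at *
      omega
    obtain ⟨-, -, b, hv'b, hbw⟩ := dist_eq_two_iff.mp hv'w2
    have hbv : b ≠ v := by
      rintro rfl
      rw [dist_eq_one_iff_adj.mpr hbw] at hvw
      omega
    exact mem_biUnion.mpr ⟨b, mem_erase.mpr ⟨hbv, by simpa using hv'b⟩, by simpa [hbw] using hwW⟩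
  calc #(W \ G.sphere v' 3) + 2 * (k - 1)
      ≤ ∑ b ∈ A, (#(G.neighborFinset b ∩ W) + 2) := by
        rw [sum_add_distrib, sum_const, hA, smul_eq_mul, mul_comm]
        exact add_le_add_left ((card_le_card hcover).trans card_biUnion_le) _
    _ ≤ ∑ b ∈ A, (k + if b ∈ G.sphere u 3 then 1 else 0) :=
        sum_le_sum fun b hb =>
          card_inter_sdiff_add_two_le hG huv hv' hreg (by simpa using (mem_erase.mp hb).2)
    _ = k * (k - 1) + #(A ∩ G.sphere u 3) := by
        rw [sum_add_distrib, sum_const, hA, smul_eq_mul, sum_boole, filter_mem_eq_inter,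
          mul_comm, Nat.cast_id]

lemma one_le_card_neighborFinset_inter_sphere_three (hG : 5 ≤ G.egirth) (huv : G.dist u v = 3)
    (hv' : G.neighborSet v ∩ distTwoSet G u = {v'}) (hreg : G.IsRegularOfDegree k) :
    1 ≤ #(G.neighborFinset u ∩ G.sphere v' 3) := by
  obtain ⟨hvv', huv'⟩ := adj_and_dist_eq_two_of_inter_eq hv'
  obtain ⟨-, hnuv', x, hux, hxv'⟩ := dist_eq_two_iff.mp huv'
  have hvx : x ≠ v := by
    rintro rfl
    rw [dist_eq_one_iff_adj.mpr hux] at huv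
    omega
  have hsub : G.neighborFinset v' ∩ G.sphere u 2 ⊆ ((G.neighborFinset v').erase v).erase x := by
    intro b hb
    simp only [mem_inter, mem_neighborFinset, mem_sphere] at hb
    simp only [mem_erase, mem_neighborFinset]
    refine ⟨?_, ?_, hb.1⟩
    · rintro rfl
      rw [dist_eq_one_iff_adj.mpr hux] at hb
      omega
    · rintro rfl
      omega
  have := card_le_card hsub
  have := card_erase_add_one (mem_erase.mpr ⟨hvx, (mem_neighborFinset ..).mpr hxv'.symm⟩)
  have := card_erase_add_one ((mem_neighborFinset ..).mpr hvv'.symm)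
  have := card_inter_sphere_two_le hG hnuv'
  have := one_add_card_inter_sphere_two_add_card_inter_sphere_three hG hreg
    (dist_comm.trans huv' : G.dist v' u = 2)
  rw [card_neighborFinset_eq_degree, hreg.degree_eq] at *
  omega

lemma one_add_card_sdiff_inter_le_edgesTwoThree (hG : 5 ≤ G.egirth) (huv : G.dist u v = 3)
    (hv' : G.neighborSet v ∩ distTwoSet G u = {v'}) (hreg : G.IsRegularOfDegree k) :
    1 + #((G.sphere v 2 \ G.neighborFinset v') ∩ G.sphere v' 3) ≤ G.edgesTwoThree v' := by
  obtain ⟨hvv', huv'⟩ := adj_and_dist_eq_two_of_inter_eq hv'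
  set A := (G.neighborFinset v).erase v'
  have hcover : (G.sphere v 2 \ G.neighborFinset v') ∩ G.sphere v' 3 ⊆
      A.biUnion fun y => G.neighborFinset y ∩ G.sphere v' 3 := by
    intro w hw
    simp only [mem_inter, mem_sdiff, mem_sphere, mem_neighborFinset] at hw
    obtain ⟨⟨hvw, hv'w⟩, hv'w3⟩ := hw
    obtain ⟨-, -, y, hvy, hyw⟩ := dist_eq_two_iff.mp hvw
    have hyv' : y ≠ v' := by rintro rfl; exact hv'w hyw
    exact mem_biUnion.mpr ⟨y, mem_erase.mpr ⟨hyv', by simpa using hvy⟩, by simpa [hyw] using hv'w3⟩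
  have huA : u ∉ A := fun h => by
    have := (mem_neighborFinset ..).mp (mem_erase.mp h).2
    rw [dist_eq_one_iff_adj.mpr this.symm] at huv
    omega
  have hsub : insert u A ⊆ G.sphere v' 2 := by
    refine insert_subset (by simpa [dist_comm] using huv') fun y hy => ?_
    obtain ⟨hyv', hvy⟩ := mem_erase.mp hy
    exact mem_sphere.mpr (dist_eq_two_of_adj_of_adj (hG.trans' (by norm_num)) hvv'.symm
      (by simpa using hvy) (Ne.symm hyv'))
  calc 1 + #((G.sphere v 2 \ G.neighborFinset v') ∩ G.sphere v' 3)
      ≤ #(G.neighborFinset u ∩ G.sphere v' 3) +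
          ∑ y ∈ A, #(G.neighborFinset y ∩ G.sphere v' 3) :=
        add_le_add (one_le_card_neighborFinset_inter_sphere_three hG huv hv' hreg)
          ((card_le_card hcover).trans card_biUnion_le)
    _ = ∑ y ∈ insert u A, #(G.neighborFinset y ∩ G.sphere v' 3) := by rw [sum_insert huA]
    _ ≤ G.edgesTwoThree v' := sum_le_edgesTwoThree hsub

lemma add_one_le_edgesTwoThree_add (hG : 5 ≤ G.egirth) (huv : G.dist u v = 3)
    (hv' : G.neighborSet v ∩ distTwoSet G u = {v'}) (hreg : G.IsRegularOfDegree k) :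
    k + 1 ≤ G.edgesTwoThree v' + #(G.neighborFinset v' ∩ G.sphere u 3) := by
  have hvv' := (adj_and_dist_eq_two_of_inter_eq hv').1
  have hW := card_sphere_two_sdiff_neighborFinset hG hreg hvv'
  have hsplit := card_sdiff_add_card_inter (G.sphere v 2 \ G.neighborFinset v') (G.sphere v' 3)
  have hout := card_sdiff_sphere_three_add_le hG huv hv' hreg
  have hin := one_add_card_sdiff_inter_le_edgesTwoThree hG huv hv' hreg
  have hv : #(G.neighborFinset v' ∩ G.sphere u 3) =
      #((G.neighborFinset v').erase v ∩ G.sphere u 3) + 1 := by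
    rw [erase_inter, card_erase_add_one (by simpa [dist_comm] using ⟨hvv'.symm, huv⟩)]
  have hk : k * (k - 1) = (k - 1) ^ 2 + (k - 1) := by
    rcases k with _ | k
    · simp
    · simp only [Nat.add_sub_cancel]; ring
  omega

/-- Summing the degree bound at two neighbours `w₁ ≠ w₂` of `y` in `V_{B''}` against the edge
counts `e(N₂, N₃) = 2ε` at `u`, `v` and `v'` would give `3k + 1 ≤ 3 + 6ε ≤ 3k`. -/
lemma card_inter_vertB_le_one (hG : 5 ≤ G.egirth) (huv : G.dist u v = 3)
    (hv' : G.neighborSet v ∩ distTwoSet G u = {v'}) (hreg : G.IsRegularOfDegree k) {ε : ℕ}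
    (hE : ∀ z, G.edgesTwoThree z = 2 * ε) (hε : 2 * ε ≤ k - 1) (hvy : G.Adj v y) :
    #(G.neighborFinset y ∩ vertB G u v v') ≤ 1 := by
  refine card_le_one.mpr fun w₁ h₁ w₂ h₂ => by_contra fun hne => ?_
  simp only [mem_inter, mem_neighborFinset] at h₁ h₂
  have hyB : y ∉ vertB G u v v' := fun h => by
    have := (mem_vertB.mp h).1
    rw [dist_eq_one_iff_adj.mpr hvy] at this
    omega
  have hk : 0 < k := hreg.degree_eq v ▸ (G.degree_pos_iff_exists_adj v).mpr ⟨y, hvy⟩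
  have := le_two_add_of_mem_vertB hG hv' hreg h₁.2
  have := le_two_add_of_mem_vertB hG hv' hreg h₂.2
  have := card_inter_add_card_inter_add_two_le hG hyB h₁.1 h₂.1 h₁.2 h₂.2 hne
  have := add_add_card_le_sum_add_two (fun w hw => one_le_card_inter_sphere_three huv hv' hw)
    h₁.2 h₂.2 hne
  have := add_le_sum (f := fun w => #(G.neighborFinset w ∩ G.sphere v 3))
    (fun _ _ => Nat.zero_le _) h₁.2 h₂.2 hne
  have := card_inter_sphere_three_add_sum_le_edgesTwoThree hv'
  have := one_add_sum_le_edgesTwoThree hG huv hv'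
  have := add_one_le_edgesTwoThree_add hG huv hv' hreg
  simp only [hE] at *
  omega

end SimpleGraph

theorem vgr_Li_small_count_general {V : Type*} [Fintype V] (G : SimpleGraph V) [DecidableRel G.Adj]
    (k ε n : ℕ) (hεk : 2 * ε ≤ k - 1)
    (hG : IsVGR G n k 5 (k * (k - 1) ^ 2 / 2 - ε)) (u v v' : V)
    (hdist : G.dist u v = 3)
    (hv' : G.neighborSet v ∩ distTwoSet G u = {v'}) :
    {vi : V | G.Adj v vi ∧ vi ≠ v' ∧
        (G.neighborSet vi
          ∩ (distTwoSet G v \ (G.neighborSet u ∪ distTwoSet G u ∪ G.neighborSet v'))).ncard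
          = k - 2}.ncard
      = ((distTwoSet G v ∩ distTwoSet G u) \ G.neighborSet v').ncard := by
  classical
  obtain ⟨-, hreg, hgirth, hcyc⟩ := hG
  have h5 : 5 ≤ G.egirth := by
    have hg : G.girth = 5 := by exact_mod_cast hgirth
    simp [egirth_eq_girth, hg]
  have hE z : G.edgesTwoThree z = 2 * ε := edgesTwoThree_eq h5 hreg hεk (hcyc z)
  simp only [← coe_vertB, ← coe_vertC]
  simp only [← coe_neighborFinset, ← coe_inter, Set.ncard_coe_finset]
  calc {vi | G.Adj v vi ∧ vi ≠ v' ∧ #(G.neighborFinset vi ∩ vertC G u v v') = k - 2}.ncard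
      = #{vi ∈ (G.neighborFinset v).erase v' |
          #(G.neighborFinset vi ∩ vertC G u v v') = k - 2} := by
        rw [← Set.ncard_coe_finset]
        congr 1
        ext vi
        simp only [Set.mem_ofPred_eq, coe_filter, mem_erase, mem_neighborFinset]
        tauto
    _ = #{vi ∈ (G.neighborFinset v).erase v' | #(G.neighborFinset vi ∩ vertB G u v v') = 1} := by
        refine congrArg card (filter_congr fun vi hvi => ?_)
        obtain ⟨hne, hvi⟩ := mem_erase.mp hvi
        exact card_inter_vertC_eq_iff h5 hdist hv' hreg ((mem_neighborFinset ..).mp hvi) hne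
    _ = ∑ vi ∈ (G.neighborFinset v).erase v', #(G.neighborFinset vi ∩ vertB G u v v') :=
        card_filter_eq_one_eq_sum fun vi hvi => card_inter_vertB_le_one h5 hdist hv' hreg hE hεk
          ((mem_neighborFinset ..).mp (mem_erase.mp hvi).2)
    _ = ∑ w ∈ vertB G u v v', #(G.neighborFinset w ∩ (G.neighborFinset v).erase v') :=
        sum_card_neighborFinset_inter_comm ..
    _ = #(vertB G u v v') := by
        rw [sum_const_nat fun w hw => card_inter_erase_eq_one h5 hw, mul_one]

/-- Let `G` be a `vgr(n, k, 5, k(k-1)²/2 − ε)`-graph with `k ≥ 3` and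
`0 < ε ≤ (k-1)/2`, let `u` be a vertex, let `v` be at distance exactly `3` from `u` with
unique neighbor `v'` in `N₂(u)`, and set `V_{B''} = (N₂(v) ∩ N₂(u)) ∖ N(v')` and
`V_{C''} = N₂(v) ∖ (N(u) ∪ N₂(u) ∪ N(v'))`.  Then the number of neighbors `vᵢ ≠ v'` of `v`
with `|N(vᵢ) ∩ V_{C''}| = k − 2` is exactly `|V_{B''}|`. -/
theorem vgr_Li_small_count {V : Type*} [Fintype V] (G : SimpleGraph V) [DecidableRel G.Adj]
    (k ε n : ℕ) (hk : 3 ≤ k) (hε : 0 < ε) (hεk : 2 * ε ≤ k - 1)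
    (hG : IsVGR G n k 5 (k * (k - 1) ^ 2 / 2 - ε)) (u v v' : V)
    (hdist : G.dist u v = 3)
    (hv' : G.neighborSet v ∩ distTwoSet G u = {v'}) :
    {vi : V | G.Adj v vi ∧ vi ≠ v' ∧
        (G.neighborSet vi
          ∩ (distTwoSet G v \ (G.neighborSet u ∪ distTwoSet G u ∪ G.neighborSet v'))).ncard
          = k - 2}.ncard
      = ((distTwoSet G v ∩ distTwoSet G u) \ G.neighborSet v').ncard :=
  vgr_Li_small_count_general G k ε n hεk hG u v v' hdist hv'
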